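/- Let n ≥ 11 and d = n − (2k−1) for some positive integer k, with 3 ≤ d ≤ n−7. Then the number of maximal unrefinable partitions of T_n − d equals 1 + D(k), where D(k) is the number of partitions of k into distinct parts (with at least two parts). -/

import Mathlib

/-! With `m = n - 2`, the number partitioned is `T m + m + 2k`, and `2k ≤ m`.
If an unrefinable partition has largest part `s`, then for each `0 < a < s / 2` one of `a`, `s - a`
is a part; summing over `a ≤ m` shows that the largest part is at most `2m`, and `2m` is attained.
When it is `2m`, each pair `{m - a, m + a}` with `0 < a < m` contains a part, and the sum leaves an
excess of exactly `2k` over `[1, m) ∪ {2m}`. Hence the partition is `swapPartition m P`, where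
`m - a` is exchanged for `m + a` for `a` in a set `P` of distinct positive integers summing to `k`,
or, when `m = 2k`, it is `[1, m] ∪ {2m}`. All of these are unrefinable except `P = {k}` with
`m = 2k`, so the maximal partitions are one for each partition of `k` into at least two distinct
parts, plus `swapPartition m {k}` or `[1, m] ∪ {2m}`. -/

/-- The n-th triangular number. -/
def T (n : ℕ) : ℕ := n * (n + 1) / 2

/-- A partition of `N` into distinct parts, represented as a finite set of
positive integers with at least two elements summing to `N`. -/
def DistinctPartition (N : ℕ) (S : Finset ℕ) : Prop :=
  (∀ x ∈ S, 0 < x) ∧ 2 ≤ S.card ∧ S.sum id = N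

/-- The missing parts: integers in `{1, …, λ_t}` not appearing in the partition. -/
def Missing (S : Finset ℕ) : Finset ℕ := Finset.Icc 1 (S.sup id) \ S

/-- No part is the sum of two distinct missing parts. -/
def Unrefinable (S : Finset ℕ) : Prop :=
  ∀ a ∈ Missing S, ∀ b ∈ Missing S, a ≠ b → a + b ∉ S

def UnrefinablePartition (N : ℕ) (S : Finset ℕ) : Prop :=
  DistinctPartition N S ∧ Unrefinable S

/-- A maximal unrefinable partition: its largest part is maximal among the
largest parts of all unrefinable partitions of `N`. -/
def MaximalUnrefinable (N : ℕ) (S : Finset ℕ) : Prop :=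
  UnrefinablePartition N S ∧
    ∀ S' : Finset ℕ, UnrefinablePartition N S' → S'.sup id ≤ S.sup id

open Finset

lemma T_eq_sum_range (n : ℕ) : T n = ∑ i ∈ range (n + 1), i := by
  rw [sum_range_id, T, Nat.add_sub_cancel, mul_comm]

lemma T_add_two (n : ℕ) : T (n + 2) = T n + 2 * n + 3 := by
  rw [T_eq_sum_range, T_eq_sum_range, sum_range_succ, sum_range_succ]
  ring

lemma sum_Ioo_sub_add_self (m : ℕ) : ∑ a ∈ Ioo 0 m, (m - a) + m = T m := by
  have hrange : ∑ a ∈ range m, (m - a) = ∑ a ∈ Ioo 0 m, (m - a) + m := by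
    rcases Nat.eq_zero_or_pos m with rfl | hm
    · simp
    · rw [range_eq_Ico, sum_eq_sum_Ico_succ_bot hm, Ico_add_one_left_eq_Ioo, add_comm,
        Nat.sub_zero]
  rw [← hrange, T_eq_sum_range, sum_range_succ', ← sum_range_reflect]
  exact sum_congr rfl fun a ha => by rw [mem_range] at ha; omega

lemma add_le_sum_of_ne {P : Finset ℕ} {a b : ℕ} (ha : a ∈ P) (hb : b ∈ P) (hab : a ≠ b) :
    a + b ≤ ∑ x ∈ P, x :=
  calc a + b = ∑ x ∈ {a, b}, x := (sum_pair (f := fun x => x) hab).symm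
    _ ≤ ∑ x ∈ P, x := sum_le_sum_of_subset (insert_subset ha (singleton_subset_iff.mpr hb))

lemma mem_missing_iff {S : Finset ℕ} {x : ℕ} :
    x ∈ Missing S ↔ (0 < x ∧ x ≤ S.sup id) ∧ x ∉ S := by
  rw [Missing, mem_sdiff, mem_Icc, Nat.one_le_iff_ne_zero, Nat.pos_iff_ne_zero]

namespace Unrefinable

variable {S : Finset ℕ}

lemma mem_or_mem_of_add_mem (hS : Unrefinable S) {x y : ℕ} (hx : 0 < x) (hy : 0 < y)
    (hxy : x ≠ y) (h : x + y ∈ S) : x ∈ S ∨ y ∈ S := by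
  by_contra! hxyS
  have hle : x + y ≤ S.sup id := le_sup (f := id) h
  exact hS x (mem_missing_iff.mpr ⟨⟨hx, by omega⟩, hxyS.1⟩)
    y (mem_missing_iff.mpr ⟨⟨hy, by omega⟩, hxyS.2⟩) hxy h

lemma add_sum_le_sum (hS : Unrefinable S) {A : Finset ℕ} {s : ℕ} (hs : s ∈ S)
    (hA : ∀ a ∈ A, 0 < a ∧ 2 * a < s) : s + ∑ a ∈ A, a ≤ ∑ x ∈ S, x := by
  classical
  let pick (a : ℕ) : ℕ := if a ∈ S then a else s - a
  have hpick : ∀ a ∈ A, pick a ∈ S.erase s ∧ a ≤ pick a := by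
    intro a ha
    obtain ⟨ha0, has⟩ := hA a ha
    by_cases haS : a ∈ S
    · simp only [pick, if_pos haS, mem_erase]
      exact ⟨⟨by omega, haS⟩, le_rfl⟩
    · have hsa : s - a ∈ S := (hS.mem_or_mem_of_add_mem ha0 (by omega) (by omega)
        (by rwa [Nat.add_sub_cancel' (by omega)])).resolve_left haS
      simp only [pick, if_neg haS, mem_erase]
      exact ⟨⟨by omega, hsa⟩, by omega⟩
  have hinj : Set.InjOn pick A := by
    intro a ha b hb hab
    have := hA a ha
    have := hA b hb
    simp only [pick] at hab
    split_ifs at hab <;> omega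
  calc s + ∑ a ∈ A, a ≤ s + ∑ a ∈ A, pick a := by gcongr with a ha; exact (hpick a ha).2
    _ = s + ∑ x ∈ A.image pick, x := by rw [sum_image hinj]
    _ ≤ s + ∑ x ∈ S.erase s, x := by
      gcongr
      intro x hx
      obtain ⟨a, ha, rfl⟩ := mem_image.mp hx
      exact (hpick a ha).1
    _ = ∑ x ∈ S, x := add_sum_erase S id hs

end Unrefinable

def swapPartition (m : ℕ) (P : Finset ℕ) : Finset ℕ :=
  insert (2 * m) ((Ioo 0 m).image fun a => if a ∈ P then m + a else m - a)

section swapPartition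

variable {m a x : ℕ} {P : Finset ℕ}

lemma mem_swapPartition : x ∈ swapPartition m P ↔
    x = 2 * m ∨ ∃ a, (0 < a ∧ a < m) ∧ (if a ∈ P then m + a else m - a) = x := by
  simp [swapPartition]

lemma le_of_mem_swapPartition (hx : x ∈ swapPartition m P) : x ≤ 2 * m := by
  rw [mem_swapPartition] at hx
  rcases hx with rfl | ⟨a, ⟨-, ham⟩, rfl⟩
  · rfl
  · split_ifs <;> omega

lemma pos_of_mem_swapPartition (hm : 0 < m) (hx : x ∈ swapPartition m P) : 0 < x := by
  rw [mem_swapPartition] at hx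
  rcases hx with rfl | ⟨a, ⟨-, ham⟩, rfl⟩
  · omega
  · split_ifs <;> omega

lemma self_notMem_swapPartition (hm : 0 < m) : m ∉ swapPartition m P := by
  rw [mem_swapPartition]
  rintro (h | ⟨a, ⟨ha, ham⟩, h⟩)
  · omega
  · split_ifs at h <;> omega

lemma add_mem_swapPartition_iff (ha : 0 < a) (ham : a < m) :
    m + a ∈ swapPartition m P ↔ a ∈ P := by
  rw [mem_swapPartition]
  constructor
  · rintro (h | ⟨b, ⟨hb, hbm⟩, h⟩)
    · omega
    · split_ifs at h with hbP
      · rwa [← Nat.add_left_cancel h]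
      · omega
  · exact fun haP => Or.inr ⟨a, ⟨ha, ham⟩, if_pos haP⟩

lemma sub_mem_swapPartition_iff (ha : 0 < a) (ham : a < m) :
    m - a ∈ swapPartition m P ↔ a ∉ P := by
  rw [mem_swapPartition]
  constructor
  · rintro (h | ⟨b, ⟨hb, hbm⟩, h⟩)
    · omega
    · split_ifs at h with hbP
      · omega
      · rwa [show a = b by omega]
  · exact fun haP => Or.inr ⟨a, ⟨ha, ham⟩, if_neg haP⟩

lemma sup_swapPartition : (swapPartition m P).sup id = 2 * m :=
  le_antisymm (Finset.sup_le fun _ => le_of_mem_swapPartition)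
    (le_sup (f := id) (mem_insert_self _ _))

lemma two_le_card_swapPartition (hm : 2 ≤ m) : 2 ≤ #(swapPartition m P) := by
  have h1 : (if 1 ∈ P then m + 1 else m - 1) ∈ swapPartition m P := by
    split_ifs with h
    · exact (add_mem_swapPartition_iff one_pos (by omega)).mpr h
    · exact (sub_mem_swapPartition_iff one_pos (by omega)).mpr h
  refine one_lt_card.mpr ⟨_, h1, 2 * m, mem_insert_self _ _, ?_⟩
  split_ifs <;> omega

lemma sum_swapPartition (hP : P ⊆ Ioo 0 m) :
    ∑ x ∈ swapPartition m P, x = T m + m + 2 * ∑ a ∈ P, a := by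
  have hinj : Set.InjOn (fun a => if a ∈ P then m + a else m - a) (Ioo 0 m) := by
    intro a ha b hb h
    simp only [coe_Ioo, Set.mem_Ioo] at ha hb
    simp only at h
    split_ifs at h <;> omega
  have hnotMem : 2 * m ∉ (Ioo 0 m).image fun a => if a ∈ P then m + a else m - a := by
    simp only [mem_image, mem_Ioo, not_exists, not_and]
    intro a ha ham
    split_ifs at ham <;> omega
  have hsplit : ∀ a ∈ Ioo 0 m,
      (if a ∈ P then m + a else m - a) = (m - a) + if a ∈ P then 2 * a else 0 := by
    intro a ha
    rw [mem_Ioo] at ha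
    split_ifs <;> omega
  rw [swapPartition, sum_insert hnotMem, sum_image hinj, sum_congr rfl hsplit, sum_add_distrib,
    sum_ite_mem, inter_eq_right.mpr hP, ← mul_sum, ← sum_Ioo_sub_add_self]
  ring

lemma swapPartition_injOn (m : ℕ) : Set.InjOn (swapPartition m) {P | P ⊆ Ioo 0 m} := by
  intro P hP P' hP' h
  ext a
  by_cases ha : a ∈ Ioo 0 m
  · rw [mem_Ioo] at ha
    rw [← add_mem_swapPartition_iff (m := m) ha.1 ha.2, h, add_mem_swapPartition_iff ha.1 ha.2]
  · exact iff_of_false (fun h => ha (hP h)) (fun h => ha (hP' h))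

end swapPartition

lemma unrefinable_swapPartition {m k : ℕ} {P : Finset ℕ} (hsum : ∑ a ∈ P, a = k)
    (hm : 2 * k ≤ m) (hkP : k ∈ P → 2 * k < m) : Unrefinable (swapPartition m P) := by
  intro x hx y hy hxy hz
  wlog hlt : x < y generalizing x y
  · exact this y hy x hx hxy.symm (by rwa [add_comm]) (by omega)
  simp only [mem_missing_iff, sup_swapPartition] at hx hy
  have hle : ∀ a ∈ P, a ≤ k := fun a ha =>
    hsum ▸ single_le_sum_of_canonicallyOrdered (f := fun x => x) ha
  have hz2m := le_of_mem_swapPartition hz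
  have hxm : x < m := by omega
  have hlow : ∀ u, 0 < u → u < m → u ∉ swapPartition m P → m - u ∈ P := by
    intro u hu hum huS
    rwa [← not_not (a := m - u ∈ P),
      ← sub_mem_swapPartition_iff (m := m) (a := m - u) (by omega) (by omega),
      Nat.sub_sub_self hum.le]
  have ha := hlow x hx.1.1 hxm hx.2
  have hak := hle _ ha
  have hz_ne : x + y ≠ 2 * m := fun h => hy.2 <| by
    rwa [show y = m + (m - x) by omega, add_mem_swapPartition_iff (by omega) (by omega)]
  have hc : x + y - m ∈ P := by
    rwa [← add_mem_swapPartition_iff (m := m) (by omega) (by omega),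
      Nat.add_sub_cancel' (by omega)]
  have hck := hle _ hc
  have key : x + y - m = k ∧ m = 2 * k := by
    rcases lt_or_ge y m with hym | hym
    · have hb := hlow y hy.1.1 hym hy.2
      have := add_le_sum_of_ne ha hb (by omega)
      omega
    · omega
  have := hkP (key.1 ▸ hc)
  omega

lemma unrefinable_insert_swapPartition_empty {m : ℕ} (hm : 0 < m) :
    Unrefinable (insert m (swapPartition m ∅)) := by
  have hsup : (insert m (swapPartition m ∅)).sup id = 2 * m := by
    rw [sup_insert, sup_swapPartition]
    simp only [id]
    omega
  have hgt : ∀ u ∈ Missing (insert m (swapPartition m ∅)), m < u := by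
    intro u hu
    rw [mem_missing_iff, hsup, mem_insert, not_or] at hu
    by_contra! hum
    refine hu.2.2 ?_
    rw [← Nat.sub_sub_self (show u ≤ m by omega),
      sub_mem_swapPartition_iff (by omega) (by omega)]
    exact notMem_empty _
  intro x hx y hy _ hz
  have := le_sup (f := id) hz
  have := hgt x hx
  have := hgt y hy
  simp only [hsup, id] at *
  omega

lemma not_unrefinable_swapPartition_double {k : ℕ} (hk : 0 < k) :
    ¬Unrefinable (swapPartition (2 * k) {k}) := by
  intro h
  refine h k ?_ (2 * k) ?_ (by omega) ?_
  · rw [mem_missing_iff, sup_swapPartition]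
    refine ⟨⟨hk, by omega⟩, fun hmem => ?_⟩
    have := (sub_mem_swapPartition_iff (m := 2 * k) (P := {k}) hk (by omega)).mp
    rw [show 2 * k - k = k by omega] at this
    exact this hmem (mem_singleton_self k)
  · rw [mem_missing_iff, sup_swapPartition]
    exact ⟨⟨by omega, by omega⟩, self_notMem_swapPartition (by omega)⟩
  · rw [add_comm, add_mem_swapPartition_iff hk (by omega)]
    exact mem_singleton_self k

lemma unrefinablePartition_swapPartition {m k : ℕ} {P : Finset ℕ} (hk : 0 < k)
    (hP : P ⊆ Ioo 0 m) (hsum : ∑ a ∈ P, a = k) (hm : 2 * k ≤ m)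
    (hkP : k ∈ P → 2 * k < m) :
    UnrefinablePartition (T m + m + 2 * k) (swapPartition m P) :=
  ⟨⟨fun _ => pos_of_mem_swapPartition (by omega), two_le_card_swapPartition (by omega),
    (sum_swapPartition hP).trans (by rw [hsum])⟩, unrefinable_swapPartition hsum hm hkP⟩

lemma unrefinablePartition_insert_swapPartition_empty {m : ℕ} (hm : 0 < m) :
    UnrefinablePartition (T m + m + m) (insert m (swapPartition m ∅)) := by
  refine ⟨⟨fun x hx => ?_, ?_, ?_⟩, unrefinable_insert_swapPartition_empty hm⟩
  · rcases mem_insert.mp hx with rfl | hx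
    exacts [hm, pos_of_mem_swapPartition hm hx]
  · rw [card_insert_of_notMem (self_notMem_swapPartition hm)]
    have : 0 < #(swapPartition m ∅) := card_pos.mpr ⟨2 * m, mem_insert_self _ _⟩
    omega
  · change ∑ x ∈ _, x = _
    rw [sum_insert (self_notMem_swapPartition hm), sum_swapPartition (empty_subset _), sum_empty]
    ring

section classification

variable {m k : ℕ} {S : Finset ℕ}

lemma sup_le_of_unrefinablePartition (hm : 2 * k ≤ m)
    (hS : UnrefinablePartition (T m + m + 2 * k) S) : S.sup id ≤ 2 * m := by
  obtain ⟨⟨-, hcard, hsum⟩, hunref⟩ := hS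
  obtain ⟨s, hs, hse⟩ := exists_mem_eq_sup S (card_pos.mp (by omega)) id
  rw [hse, id]
  by_contra! hlt
  have := hunref.add_sum_le_sum hs (A := (range (m + 1)).erase 0) fun a ha => by
    rw [mem_erase, mem_range] at ha
    omega
  rw [sum_erase (range (m + 1)) (f := fun a => a) rfl, ← T_eq_sum_range] at this
  change ∑ x ∈ S, x = _ at hsum
  omega

lemma swapPartition_subset_of_unrefinable (hS : Unrefinable S) (h2m : 2 * m ∈ S) :
    swapPartition m ((Ioo 0 m).filter fun a => m - a ∉ S) ⊆ S := by
  intro x hx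
  rw [mem_swapPartition] at hx
  rcases hx with rfl | ⟨a, ⟨ha, ham⟩, rfl⟩
  · exact h2m
  split_ifs with haP
  · refine (hS.mem_or_mem_of_add_mem (x := m - a) (y := m + a) (by omega) (by omega) (by omega)
      ?_).resolve_left (mem_filter.mp haP).2
    rwa [show m - a + (m + a) = 2 * m by omega]
  · by_contra h
    exact haP (mem_filter.mpr ⟨mem_Ioo.mpr ⟨ha, ham⟩, h⟩)

lemma eq_swapPartition_of_sup_eq (hm : 2 * k ≤ m)
    (hS : UnrefinablePartition (T m + m + 2 * k) S) (hsup : S.sup id = 2 * m) :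
    (∃ P ⊆ Ioo 0 m, ∑ a ∈ P, a = k ∧ S = swapPartition m P) ∨
      (m = 2 * k ∧ S = insert m (swapPartition m ∅)) := by
  obtain ⟨⟨hpos, hcard, hsum⟩, hunref⟩ := hS
  have h2m : 2 * m ∈ S := by
    obtain ⟨b, hb, hbe⟩ := exists_mem_eq_sup S (card_pos.mp (by omega)) id
    rwa [← hsup, hbe]
  set P := (Ioo 0 m).filter fun a => m - a ∉ S
  have hPsub : P ⊆ Ioo 0 m := filter_subset _ _
  have hsub : swapPartition m P ⊆ S := swapPartition_subset_of_unrefinable hunref h2m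
  have hrest_sum : ∑ x ∈ S \ swapPartition m P, x + 2 * ∑ a ∈ P, a = 2 * k := by
    have := sum_sdiff (f := fun x => x) hsub
    rw [sum_swapPartition hPsub] at this
    change ∑ x ∈ S, x = _ at hsum
    omega
  -- every other part is at least `m` (the parts below `m` are all in `swapPartition m P`) and at
  -- most the excess `2k ≤ m`
  have hrest : S \ swapPartition m P ⊆ {m} := by
    intro x hx
    have hxle : x ≤ 2 * k :=
      (single_le_sum_of_canonicallyOrdered (f := fun x => x) hx).trans (by omega)
    rw [mem_sdiff] at hx
    have hx0 := hpos x hx.1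
    have hxm : ¬x < m := fun hxm => hx.2 <| by
      rw [← Nat.sub_sub_self hxm.le, sub_mem_swapPartition_iff (by omega) (by omega), mem_filter,
        Nat.sub_sub_self hxm.le, not_and, not_not]
      exact fun _ => hx.1
    rw [mem_singleton]
    omega
  rcases subset_singleton_iff.mp hrest with h | h
  · rw [h, sum_empty] at hrest_sum
    exact Or.inl ⟨P, hPsub, by omega, (sdiff_eq_empty_iff_subset.mp h).antisymm hsub⟩
  · rw [h, sum_singleton] at hrest_sum
    have hPempty : P = ∅ := by
      refine eq_empty_of_forall_notMem fun a ha => ?_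
      have := (sum_eq_zero_iff.mp (show ∑ a ∈ P, a = 0 by omega)) a ha
      have := mem_Ioo.mp (hPsub ha)
      omega
    refine Or.inr ⟨by omega, ?_⟩
    rw [← union_sdiff_of_subset hsub, h, hPempty, union_comm, ← insert_eq]

end classification

lemma maximalUnrefinable_iff {N s : ℕ} {S : Finset ℕ}
    (hs : IsGreatest {x | ∃ S', UnrefinablePartition N S' ∧ S'.sup id = x} s) :
    MaximalUnrefinable N S ↔ UnrefinablePartition N S ∧ S.sup id = s := by
  obtain ⟨⟨S₀, hS₀, rfl⟩, hle⟩ := hs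
  refine ⟨fun h => ⟨h.1, (hle ⟨S, h.1, rfl⟩).antisymm (h.2 S₀ hS₀)⟩,
    fun h => ⟨h.1, fun S' hS' => ?_⟩⟩
  rw [h.2]
  exact hle ⟨S', hS', rfl⟩

namespace DistinctPartition

variable {k : ℕ} {P : Finset ℕ}

lemma subset_Ioo {m : ℕ} (hP : DistinctPartition k P) (hkm : k < m) : P ⊆ Ioo 0 m :=
  fun a ha => mem_Ioo.mpr ⟨hP.1 a ha,
    (single_le_sum_of_canonicallyOrdered (f := id) ha).trans_lt (hP.2.2 ▸ hkm)⟩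

lemma notMem (hP : DistinctPartition k P) : k ∉ P := by
  intro hkP
  obtain ⟨b, hb, hbk⟩ := exists_mem_ne hP.2.1 k
  have := add_le_sum_of_ne hkP hb hbk.symm
  have := hP.1 b hb
  have : ∑ a ∈ P, a = k := hP.2.2
  omega

end DistinctPartition

lemma distinctPartition_or_eq_singleton {k : ℕ} {P : Finset ℕ} (hpos : ∀ a ∈ P, 0 < a)
    (hsum : ∑ a ∈ P, a = k) (hk : 0 < k) : DistinctPartition k P ∨ P = {k} := by
  by_cases hcard : 2 ≤ #P
  · exact Or.inl ⟨hpos, hcard, hsum⟩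
  · have : 0 < #P := card_pos.mpr (nonempty_of_sum_ne_zero (hsum ▸ hk.ne'))
    obtain ⟨a, rfl⟩ := card_eq_one.mp (show #P = 1 by omega)
    rw [sum_singleton] at hsum
    exact Or.inr (hsum ▸ rfl)

def exceptionalPartition (m k : ℕ) : Finset ℕ :=
  if m = 2 * k then insert m (swapPartition m ∅) else swapPartition m {k}

section count

variable {m k : ℕ}

lemma unrefinablePartition_exceptionalPartition (hk : 0 < k) (hm : 2 * k ≤ m) :
    UnrefinablePartition (T m + m + 2 * k) (exceptionalPartition m k) ∧
      (exceptionalPartition m k).sup id = 2 * m := by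
  by_cases h : m = 2 * k
  · rw [exceptionalPartition, if_pos h, sup_insert, sup_swapPartition]
    refine ⟨h ▸ unrefinablePartition_insert_swapPartition_empty (by omega), ?_⟩
    exact max_eq_right (by simp only [id]; omega)
  · rw [exceptionalPartition, if_neg h]
    have hsingleton : ({k} : Finset ℕ) ⊆ Ioo 0 m := by simp; omega
    exact ⟨unrefinablePartition_swapPartition hk hsingleton (sum_singleton _ _) hm
      fun _ => by omega, sup_swapPartition⟩

lemma exceptionalPartition_notMem_image (hk : 0 < k) (hm : 2 * k ≤ m) :
    exceptionalPartition m k ∉ swapPartition m '' {P | DistinctPartition k P} := by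
  rintro ⟨P, hP, hPS⟩
  by_cases h : m = 2 * k
  · rw [exceptionalPartition, if_pos h] at hPS
    exact self_notMem_swapPartition (m := m) (P := P) (by omega) (hPS ▸ mem_insert_self _ _)
  · rw [exceptionalPartition, if_neg h] at hPS
    have hsingleton : ({k} : Finset ℕ) ⊆ Ioo 0 m := by simp; omega
    have := hP.2.1
    rw [swapPartition_injOn m (hP.subset_Ioo (by omega)) hsingleton hPS, card_singleton] at this
    omega

lemma setOf_maximalUnrefinable_eq (hk : 0 < k) (hm : 2 * k ≤ m) :
    {S | MaximalUnrefinable (T m + m + 2 * k) S} =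
      insert (exceptionalPartition m k) (swapPartition m '' {P | DistinctPartition k P}) := by
  have hexc := unrefinablePartition_exceptionalPartition hk hm
  have hgreatest : IsGreatest
      {x | ∃ S, UnrefinablePartition (T m + m + 2 * k) S ∧ S.sup id = x} (2 * m) :=
    ⟨⟨_, hexc⟩, by rintro _ ⟨S, hS, rfl⟩; exact sup_le_of_unrefinablePartition hm hS⟩
  ext S
  simp only [Set.mem_ofPred_eq, maximalUnrefinable_iff hgreatest, Set.mem_insert_iff,
    Set.mem_image]
  constructor
  · rintro ⟨hS, hsup⟩
    rcases eq_swapPartition_of_sup_eq hm hS hsup with ⟨P, hP, hsum, rfl⟩ | ⟨h, rfl⟩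
    · rcases distinctPartition_or_eq_singleton (fun a ha => (mem_Ioo.mp (hP ha)).1) hsum hk
        with hD | rfl
      · exact Or.inr ⟨P, hD, rfl⟩
      · have h : m ≠ 2 * k := by
          rintro rfl
          exact not_unrefinable_swapPartition_double hk hS.2
        exact Or.inl (by rw [exceptionalPartition, if_neg h])
    · exact Or.inl (by rw [exceptionalPartition, if_pos h])
  · rintro (rfl | ⟨P, hP, rfl⟩)
    · exact hexc
    · exact ⟨unrefinablePartition_swapPartition hk (hP.subset_Ioo (by omega)) hP.2.2 hm
        fun hkP => absurd hkP hP.notMem, sup_swapPartition⟩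

theorem ncard_maximalUnrefinable (hk : 0 < k) (hm : 2 * k ≤ m) :
    {S | MaximalUnrefinable (T m + m + 2 * k) S}.ncard =
      1 + {P | DistinctPartition k P}.ncard := by
  have hD : {P | DistinctPartition k P} ⊆ {P | P ⊆ Ioo 0 m} :=
    fun P hP => DistinctPartition.subset_Ioo hP (by omega)
  have hD_finite : {P | DistinctPartition k P}.Finite :=
    ((Ioo 0 m).powerset.finite_toSet).subset fun P hP => mem_coe.mpr (mem_powerset.mpr (hD hP))
  rw [setOf_maximalUnrefinable_eq hk hm,
    Set.ncard_insert_of_notMem (exceptionalPartition_notMem_image hk hm) (hD_finite.image _),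
    ((swapPartition_injOn m).mono hD).ncard_image, add_comm]

end count

theorem count_d_odd_distance_general (n d k : ℕ) (hk : 1 ≤ k)
    (hdk : d = n - (2 * k - 1)) (hd1 : 3 ≤ d) :
    {S : Finset ℕ | MaximalUnrefinable (T n - d) S}.ncard =
      1 + {S : Finset ℕ | DistinctPartition k S}.ncard := by
  obtain ⟨m, rfl⟩ : ∃ m, n = m + 2 := ⟨n - 2, by omega⟩
  have hN : T (m + 2) - d = T m + m + 2 * k := by
    rw [T_add_two]
    omega
  rw [hN]
  exact ncard_maximalUnrefinable hk (by omega)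

theorem count_d_odd_distance (n d k : ℕ) (hn : 11 ≤ n) (hk : 1 ≤ k)
    (hdk : d = n - (2 * k - 1)) (hd1 : 3 ≤ d) (hd2 : d ≤ n - 7) :
    {S : Finset ℕ | MaximalUnrefinable (T n - d) S}.ncard =
      1 + {S : Finset ℕ | DistinctPartition k S}.ncard :=
  count_d_odd_distance_general n d k hk hdk hd1
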